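/- arXiv:math/0507279 — 2 statements merged into one kernel-verified Lean document; each statement's English description precedes it below -/
import Mathlib

section
/- Let Λ ⊆ E be an f-invariant set admitting a hyperbolic splitting (S, U, C, λ). Then for every x ∈ Λ and every nonzero vector v ∈ E, the set {‖Dfⁿ(x)v‖ : n ∈ ℤ} is unbounded. (This is the core of Mañé's implication that the restriction of a diffeomorphism to a hyperbolic set — in particular to a compact invariant submanifold contained in a hyperbolic set — is quasi-Anosov.) -/
open Function Set Filter Topology

/-- The derivative of the `n`-th iterate of `f` (inverse iterates use the inverse map `g`)
at the point `x`, for `n : ℤ`. -/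
noncomputable def Dfn {E : Type*} [NormedAddCommGroup E] [NormedSpace ℝ E]
    (f g : E → E) (n : ℤ) (x : E) : E →L[ℝ] E :=
  if 0 ≤ n then fderiv ℝ (f^[n.toNat]) x else fderiv ℝ (g^[(-n).toNat]) x

/-- `f` is a C¹ diffeomorphism with inverse `g`. -/
def IsC1Diffeo {E : Type*} [NormedAddCommGroup E] [NormedSpace ℝ E] (f g : E → E) : Prop :=
  ContDiff ℝ 1 f ∧ ContDiff ℝ 1 g ∧ Function.LeftInverse g f ∧ Function.RightInverse g f

/-- A hyperbolic splitting `(S, U, C, lam)` for `f` (with inverse `g`) over an invariant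
set `Λ`. -/
structure HypSplit {E : Type*} [NormedAddCommGroup E] [NormedSpace ℝ E]
    (f g : E → E) (Λ : Set E) (S U : E → Submodule ℝ E) (C lam : ℝ) : Prop where
  one_le_C : 1 ≤ C
  lam_pos : 0 < lam
  lam_lt_one : lam < 1
  isCompl : ∀ x ∈ Λ, IsCompl (S x) (U x)
  mapS : ∀ x ∈ Λ, (S x).map (fderiv ℝ f x).toLinearMap = S (f x)
  mapU : ∀ x ∈ Λ, (U x).map (fderiv ℝ f x).toLinearMap = U (f x)
  stable : ∀ x ∈ Λ, ∀ v ∈ S x, ∀ n : ℕ, ‖Dfn f g (n : ℤ) x v‖ ≤ C * lam ^ n * ‖v‖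
  unstable : ∀ x ∈ Λ, ∀ v ∈ U x, ∀ n : ℕ, ‖Dfn f g (-(n : ℤ)) x v‖ ≤ C * lam ^ n * ‖v‖

/-- `f` (with inverse `g`) is quasi-Anosov on `Λ`: for every `x ∈ Λ` and every nonzero
`v`, the set `{‖Dfⁿ(x)v‖ : n ∈ ℤ}` is unbounded. -/
def QuasiAnosovOn {E : Type*} [NormedAddCommGroup E] [NormedSpace ℝ E]
    (f g : E → E) (Λ : Set E) : Prop :=
  ∀ x ∈ Λ, ∀ v : E, v ≠ 0 → ¬ BddAbove (Set.range fun n : ℤ => ‖Dfn f g n x v‖)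

section Aux
set_option linter.unusedSectionVars false
variable {E : Type*} [NormedAddCommGroup E] [NormedSpace ℝ E] {f g : E → E} {Λ : Set E}

lemma Dfn_natCast (f g : E → E) (n : ℕ) (x : E) :
    Dfn f g (n : ℤ) x = fderiv ℝ (f^[n]) x := by
  simp [Dfn]

lemma Dfn_neg_natCast (f g : E → E) (n : ℕ) (x : E) :
    Dfn f g (-(n : ℤ)) x = fderiv ℝ (g^[n]) x := by
  rcases Nat.eq_zero_or_pos n with h | h
  · subst h; simp [Dfn]
  · have h0 : ¬ (0 ≤ -(n : ℤ)) := by omega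
    simp [Dfn, h0]
    intro h'; omega

lemma inv_deriv (hf : IsC1Diffeo f g) (n : ℕ) (x v : E) :
    fderiv ℝ (g^[n]) (f^[n] x) (fderiv ℝ (f^[n]) x v) = v := by
  obtain ⟨hfc, hgc, hgf, hfg⟩ := hf
  have hfd : Differentiable ℝ f := hfc.differentiable one_ne_zero
  have hgd : Differentiable ℝ g := hgc.differentiable one_ne_zero
  have h1 : fderiv ℝ (g^[n] ∘ f^[n]) x
      = (fderiv ℝ (g^[n]) (f^[n] x)).comp (fderiv ℝ (f^[n]) x) :=
    fderiv_comp x ((hgd.iterate n) _) ((hfd.iterate n) _)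
  have h2 : g^[n] ∘ f^[n] = id := (hgf.iterate n).comp_eq_id
  rw [h2, fderiv_id] at h1
  have := congrArg (fun L : E →L[ℝ] E => L v) h1
  simpa using this.symm

lemma swap_diffeo (hf : IsC1Diffeo f g) : IsC1Diffeo g f :=
  ⟨hf.2.1, hf.1, hf.2.2.2, hf.2.2.1⟩

lemma mem_f_iter (hΛ : f '' Λ = Λ) {x : E} (hx : x ∈ Λ) (n : ℕ) : f^[n] x ∈ Λ := by
  induction n with
  | zero => simpa using hx
  | succ n ih =>
      rw [Function.iterate_succ_apply']
      exact hΛ ▸ Set.mem_image_of_mem f ih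

lemma mem_g (hf : IsC1Diffeo f g) (hΛ : f '' Λ = Λ) {x : E} (hx : x ∈ Λ) : g x ∈ Λ := by
  have hx' : x ∈ f '' Λ := hΛ.symm ▸ hx
  obtain ⟨y, hy, rfl⟩ := hx'
  rwa [hf.2.2.1 y]

lemma mem_g_iter (hf : IsC1Diffeo f g) (hΛ : f '' Λ = Λ) {x : E} (hx : x ∈ Λ) (n : ℕ) :
    g^[n] x ∈ Λ := by
  induction n with
  | zero => simpa using hx
  | succ n ih =>
      rw [Function.iterate_succ_apply']
      exact mem_g hf hΛ ih

variable {S U : E → Submodule ℝ E} {C lam : ℝ}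

lemma df_mem_U (hsplit : HypSplit f g Λ S U C lam) {x u : E} (hx : x ∈ Λ) (hu : u ∈ U x) :
    fderiv ℝ f x u ∈ U (f x) := by
  rw [← hsplit.mapU x hx]
  exact Submodule.mem_map_of_mem hu

lemma dg_mem_S (hf : IsC1Diffeo f g) (hΛ : f '' Λ = Λ) (hsplit : HypSplit f g Λ S U C lam)
    {x s : E} (hx : x ∈ Λ) (hs : s ∈ S x) : fderiv ℝ g x s ∈ S (g x) := by
  have hgx : g x ∈ Λ := mem_g hf hΛ hx
  have hfgx : f (g x) = x := hf.2.2.2 x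
  have h : s ∈ (S (g x)).map (fderiv ℝ f (g x)).toLinearMap := by
    rw [hsplit.mapS (g x) hgx, hfgx]; exact hs
  obtain ⟨w, hw, hws⟩ := h
  have key : fderiv ℝ (g^[1]) (f^[1] (g x)) (fderiv ℝ (f^[1]) (g x) w) = w :=
    inv_deriv hf 1 (g x) w
  simp only [Function.iterate_one, hfgx] at key
  simp only [ContinuousLinearMap.coe_coe] at hws
  have : fderiv ℝ g x s = w := by rw [← hws]; exact key
  rw [this]; exact hw

lemma dfn_mem_U (hsplit : HypSplit f g Λ S U C lam) (hΛ : f '' Λ = Λ)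
    (hf : IsC1Diffeo f g) {x u : E} (hx : x ∈ Λ) (hu : u ∈ U x) (n : ℕ) :
    fderiv ℝ (f^[n]) x u ∈ U (f^[n] x) := by
  have hfd : Differentiable ℝ f := hf.1.differentiable one_ne_zero
  induction n with
  | zero => simpa using hu
  | succ n ih =>
      have hcomp : fderiv ℝ (f^[n+1]) x = (fderiv ℝ f (f^[n] x)).comp (fderiv ℝ (f^[n]) x) := by
        rw [Function.iterate_succ']
        exact fderiv_comp x (hfd _) ((hfd.iterate n) _)
      rw [Function.iterate_succ_apply']
      have := df_mem_U hsplit (mem_f_iter hΛ hx n) ih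
      rw [hcomp]; exact this

lemma dgn_mem_S (hsplit : HypSplit f g Λ S U C lam) (hΛ : f '' Λ = Λ)
    (hf : IsC1Diffeo f g) {x s : E} (hx : x ∈ Λ) (hs : s ∈ S x) (n : ℕ) :
    fderiv ℝ (g^[n]) x s ∈ S (g^[n] x) := by
  have hgd : Differentiable ℝ g := hf.2.1.differentiable one_ne_zero
  induction n with
  | zero => simpa using hs
  | succ n ih =>
      have hcomp : fderiv ℝ (g^[n+1]) x = (fderiv ℝ g (g^[n] x)).comp (fderiv ℝ (g^[n]) x) := by
        rw [Function.iterate_succ']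
        exact fderiv_comp x (hgd _) ((hgd.iterate n) _)
      rw [Function.iterate_succ_apply']
      have := dg_mem_S hf hΛ hsplit (mem_g_iter hf hΛ hx n) ih
      rw [hcomp]; exact this

/-- Expansion on the unstable subspace under forward iterates. -/
lemma expand_U (hsplit : HypSplit f g Λ S U C lam) (hΛ : f '' Λ = Λ)
    (hf : IsC1Diffeo f g) {x u : E} (hx : x ∈ Λ) (hu : u ∈ U x) (n : ℕ) :
    ‖u‖ ≤ C * lam ^ n * ‖fderiv ℝ (f^[n]) x u‖ := by
  have hy : f^[n] x ∈ Λ := mem_f_iter hΛ hx n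
  have hw : fderiv ℝ (f^[n]) x u ∈ U (f^[n] x) := dfn_mem_U hsplit hΛ hf hx hu n
  have := hsplit.unstable _ hy _ hw n
  rw [Dfn_neg_natCast, inv_deriv hf n x u] at this
  exact this

/-- Expansion on the stable subspace under backward iterates. -/
lemma expand_S (hsplit : HypSplit f g Λ S U C lam) (hΛ : f '' Λ = Λ)
    (hf : IsC1Diffeo f g) {x s : E} (hx : x ∈ Λ) (hs : s ∈ S x) (n : ℕ) :
    ‖s‖ ≤ C * lam ^ n * ‖fderiv ℝ (g^[n]) x s‖ := by
  have hy : g^[n] x ∈ Λ := mem_g_iter hf hΛ hx n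
  have hw : fderiv ℝ (g^[n]) x s ∈ S (g^[n] x) := dgn_mem_S hsplit hΛ hf hx hs n
  have := hsplit.stable _ hy _ hw n
  rw [Dfn_natCast, inv_deriv (swap_diffeo hf) n x s] at this
  exact this

end Aux

/-- If `Λ` is an `f`-invariant set admitting a hyperbolic splitting, then
for every `x ∈ Λ` and every nonzero `v`, the set `{‖Dfⁿ(x)v‖ : n ∈ ℤ}` is unbounded. -/
theorem hyperbolic_splitting_implies_quasiAnosov
    {E : Type*} [NormedAddCommGroup E] [NormedSpace ℝ E] [FiniteDimensional ℝ E]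
    (f g : E → E) (hf : IsC1Diffeo f g)
    (Λ : Set E) (hΛ : f '' Λ = Λ)
    (S U : E → Submodule ℝ E) (C lam : ℝ)
    (hsplit : HypSplit f g Λ S U C lam) :
    ∀ x ∈ Λ, ∀ v : E, v ≠ 0 →
      ¬ BddAbove (Set.range fun n : ℤ => ‖Dfn f g n x v‖) := by
  intro x hx v hv hbdd
  obtain ⟨M, hM⟩ := hbdd
  have hMb : ∀ n : ℤ, ‖Dfn f g n x v‖ ≤ M := fun n => hM (Set.mem_range_self n)
  -- decompose v = s + u
  have hsup : S x ⊔ U x = ⊤ := (hsplit.isCompl x hx).sup_eq_top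
  have hvmem : v ∈ S x ⊔ U x := hsup ▸ Submodule.mem_top
  obtain ⟨s, hs, u, hu, hsu⟩ := Submodule.mem_sup.mp hvmem
  have hC0 : (0:ℝ) < C := lt_of_lt_of_le one_pos hsplit.one_le_C
  have hlam0 : (0:ℝ) ≤ lam := hsplit.lam_pos.le
  have htend : Tendsto (fun n : ℕ => lam ^ n) atTop (nhds 0) :=
    tendsto_pow_atTop_nhds_zero_of_lt_one hlam0 hsplit.lam_lt_one
  by_cases hu0 : u = 0
  · -- v = s ∈ S x, use backward expansion
    have hsv : s = v := by rw [← hsu, hu0, add_zero]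
    subst hsv
    have key : ∀ n : ℕ, ‖s‖ ≤ (C * M) * lam ^ n := by
      intro n
      have h1 := expand_S hsplit hΛ hf hx hs n
      have h2 : ‖fderiv ℝ (g^[n]) x s‖ ≤ M := by
        have := hMb (-(n : ℤ))
        rwa [Dfn_neg_natCast] at this
      calc ‖s‖ ≤ C * lam ^ n * ‖fderiv ℝ (g^[n]) x s‖ := h1
        _ ≤ C * lam ^ n * M := by
            apply mul_le_mul_of_nonneg_left h2
            positivity
        _ = (C * M) * lam ^ n := by ring
    have : ‖s‖ ≤ 0 := by
      have ht : Tendsto (fun n : ℕ => (C * M) * lam ^ n) atTop (nhds 0) := by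
        simpa using htend.const_mul (C * M)
      exact ge_of_tendsto' ht key
    exact hv (by simpa using le_antisymm this (norm_nonneg s))
  · -- u ≠ 0, use forward expansion
    have key : ∀ n : ℕ, ‖u‖ ≤ (C * (M + C * ‖s‖)) * lam ^ n := by
      intro n
      have h1 := expand_U hsplit hΛ hf hx hu n
      have hsb : ‖fderiv ℝ (f^[n]) x s‖ ≤ C * lam ^ n * ‖s‖ := by
        have := hsplit.stable x hx s hs n
        rwa [Dfn_natCast] at this
      have hvb : ‖fderiv ℝ (f^[n]) x v‖ ≤ M := by
        have := hMb (n : ℤ)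
        rwa [Dfn_natCast] at this
      have hfu : fderiv ℝ (f^[n]) x u = fderiv ℝ (f^[n]) x v - fderiv ℝ (f^[n]) x s := by
        rw [← hsu]; simp
      have hlampow : lam ^ n ≤ 1 :=
        pow_le_one₀ hlam0 hsplit.lam_lt_one.le
      have h2 : ‖fderiv ℝ (f^[n]) x u‖ ≤ M + C * ‖s‖ := by
        rw [hfu]
        calc ‖fderiv ℝ (f^[n]) x v - fderiv ℝ (f^[n]) x s‖
            ≤ ‖fderiv ℝ (f^[n]) x v‖ + ‖fderiv ℝ (f^[n]) x s‖ := norm_sub_le _ _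
          _ ≤ M + C * lam ^ n * ‖s‖ := add_le_add hvb hsb
          _ ≤ M + C * ‖s‖ := by
              have hstep : C * lam ^ n * ‖s‖ ≤ C * ‖s‖ := by
                calc C * lam ^ n * ‖s‖ ≤ C * 1 * ‖s‖ :=
                      mul_le_mul_of_nonneg_right
                        (mul_le_mul_of_nonneg_left hlampow hC0.le) (norm_nonneg s)
                  _ = C * ‖s‖ := by ring
              linarith
      calc ‖u‖ ≤ C * lam ^ n * ‖fderiv ℝ (f^[n]) x u‖ := h1
        _ ≤ C * lam ^ n * (M + C * ‖s‖) := by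
            apply mul_le_mul_of_nonneg_left h2
            positivity
        _ = (C * (M + C * ‖s‖)) * lam ^ n := by ring
    have : ‖u‖ ≤ 0 := by
      have ht : Tendsto (fun n : ℕ => (C * (M + C * ‖s‖)) * lam ^ n) atTop (nhds 0) := by
        simpa using htend.const_mul (C * (M + C * ‖s‖))
      exact ge_of_tendsto' ht key
    exact hu0 (by simpa using le_antisymm this (norm_nonneg u))
end

section
/- Let Λ ⊆ E be an f-invariant set on which f is quasi-Anosov, and let p ∈ Λ be a periodic point of period m ≥ 1 (f^m(p) = p). Then the complexification of the linear map Df^m(p) : E → E has no eigenvalue of modulus 1; i.e., the derivative of f at every periodic point is a hyperbolic linear map. -/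
open Function Set Filter Topology

noncomputable def reT (E : Type*) [NormedAddCommGroup E] [NormedSpace ℝ E] :
    TensorProduct ℝ ℂ E →ₗ[ℝ] E :=
  TensorProduct.lift ((LinearMap.lsmul ℝ E).comp Complex.reLm)

noncomputable def imT (E : Type*) [NormedAddCommGroup E] [NormedSpace ℝ E] :
    TensorProduct ℝ ℂ E →ₗ[ℝ] E :=
  TensorProduct.lift ((LinearMap.lsmul ℝ E).comp Complex.imLm)

section TensorAux
open TensorProduct
variable {E : Type*} [NormedAddCommGroup E] [NormedSpace ℝ E]

@[simp] lemma reT_tmul (c : ℂ) (x : E) : reT E (c ⊗ₜ[ℝ] x) = c.re • x := rfl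
@[simp] lemma imT_tmul (c : ℂ) (x : E) : imT E (c ⊗ₜ[ℝ] x) = c.im • x := rfl

lemma reT_baseChange (A : E →ₗ[ℝ] E) (w : ℂ ⊗[ℝ] E) :
    reT E (A.baseChange ℂ w) = A (reT E w) := by
  induction w using TensorProduct.induction_on with
  | zero => simp
  | tmul c x => simp
  | add x y hx hy => simp [hx, hy]

lemma imT_baseChange (A : E →ₗ[ℝ] E) (w : ℂ ⊗[ℝ] E) :
    imT E (A.baseChange ℂ w) = A (imT E w) := by
  induction w using TensorProduct.induction_on with
  | zero => simp
  | tmul c x => simp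
  | add x y hx hy => simp [hx, hy]

lemma reT_smul (μ : ℂ) (w : ℂ ⊗[ℝ] E) :
    reT E (μ • w) = μ.re • reT E w - μ.im • imT E w := by
  induction w using TensorProduct.induction_on with
  | zero => simp
  | tmul c x =>
      rw [TensorProduct.smul_tmul']
      simp [Complex.mul_re, smul_smul, sub_smul]
  | add x y hx hy => simp only [smul_add, map_add, hx, hy]; abel

lemma imT_smul (μ : ℂ) (w : ℂ ⊗[ℝ] E) :
    imT E (μ • w) = μ.re • imT E w + μ.im • reT E w := by
  induction w using TensorProduct.induction_on with
  | zero => simp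
  | tmul c x =>
      rw [TensorProduct.smul_tmul']
      simp [Complex.mul_im, smul_smul, add_smul, mul_comm]
  | add x y hx hy => simp only [smul_add, map_add, hx, hy]; abel

lemma tensor_decomp (w : ℂ ⊗[ℝ] E) :
    w = (1 : ℂ) ⊗ₜ[ℝ] reT E w + Complex.I ⊗ₜ[ℝ] imT E w := by
  induction w using TensorProduct.induction_on with
  | zero => simp
  | tmul c x =>
      rw [reT_tmul, imT_tmul, TensorProduct.tmul_smul, TensorProduct.tmul_smul,
        TensorProduct.smul_tmul', TensorProduct.smul_tmul', ← TensorProduct.add_tmul]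
      congr 1
      simp [Complex.real_smul, Complex.ext_iff]
  | add x y hx hy =>
      rw [map_add, map_add, TensorProduct.tmul_add, TensorProduct.tmul_add]
      conv_lhs => rw [hx, hy]
      abel

end TensorAux


/-- at a periodic point of a quasi-Anosov diffeomorphism, the
complexification of the derivative of the return map has no eigenvalue of modulus 1. -/
theorem quasiAnosov_periodic_point_hyperbolic
    {E : Type*} [NormedAddCommGroup E] [NormedSpace ℝ E] [FiniteDimensional ℝ E]
    (f g : E → E) (hf : IsC1Diffeo f g)
    (Λ : Set E) (hΛ : f '' Λ = Λ)
    (hQA : QuasiAnosovOn f g Λ)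
    (p : E) (hp : p ∈ Λ) (m : ℕ) (hm : 1 ≤ m) (hper : f^[m] p = p) :
    ∀ μ : ℂ,
      Module.End.HasEigenvalue
        (LinearMap.baseChange ℂ (fderiv ℝ (f^[m]) p).toLinearMap) μ →
      ‖μ‖ ≠ 1 := by
  intro μ hμ habs
  have hμ0 : μ ≠ 0 := by
    intro h; rw [h] at habs; simp at habs
  -- differentiability
  have hdf : ∀ (n : ℕ) (x : E), DifferentiableAt ℝ (f^[n]) x :=
    fun n x => ((hf.1.differentiable one_ne_zero).iterate n) x
  have hdg : ∀ (n : ℕ) (x : E), DifferentiableAt ℝ (g^[n]) x :=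
    fun n x => ((hf.2.1.differentiable one_ne_zero).iterate n) x
  -- chain rule
  have hcf : ∀ (a b : ℕ) (x : E), fderiv ℝ (f^[a + b]) x
      = (fderiv ℝ (f^[a]) (f^[b] x)).comp (fderiv ℝ (f^[b]) x) := by
    intro a b x
    rw [Function.iterate_add f a b]
    exact fderiv_comp x (hdf a _) (hdf b x)
  have hcg : ∀ (a b : ℕ) (x : E), fderiv ℝ (g^[a + b]) x
      = (fderiv ℝ (g^[a]) (g^[b] x)).comp (fderiv ℝ (g^[b]) x) := by
    intro a b x
    rw [Function.iterate_add g a b]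
    exact fderiv_comp x (hdg a _) (hdg b x)
  -- periodicity
  have hgper : g^[m] p = p := by
    conv_lhs => rw [← hper]
    exact (hf.2.2.1.iterate m) p
  have hperk : ∀ k : ℕ, f^[k * m] p = p := by
    intro k; induction k with
    | zero => simp
    | succ k ih =>
        rw [Nat.succ_mul, Function.iterate_add_apply, hper, ih]
  have hgperk : ∀ k : ℕ, g^[k * m] p = p := by
    intro k; induction k with
    | zero => simp
    | succ k ih =>
        rw [Nat.succ_mul, Function.iterate_add_apply, hgper, ih]
  set A : E →L[ℝ] E := fderiv ℝ (f^[m]) p with hA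
  set A' : E →L[ℝ] E := fderiv ℝ (g^[m]) p with hA'
  have hA'A : ∀ x : E, A' (A x) = x := by
    intro x
    have h1 : (g^[m]) ∘ (f^[m]) = id := funext (hf.2.2.1.iterate m)
    have h2 : fderiv ℝ ((g^[m]) ∘ (f^[m])) p = (fderiv ℝ (g^[m]) (f^[m] p)).comp A :=
      fderiv_comp p (hdg m _) (hdf m p)
    rw [h1, hper] at h2
    have := congrFun (congrArg (fun T : E →L[ℝ] E => (T : E → E)) h2.symm) x
    simpa using this
  have hAA' : ∀ x : E, A (A' x) = x := by
    intro x
    have h1 : (f^[m]) ∘ (g^[m]) = id := funext (hf.2.2.2.iterate m)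
    have h2 : fderiv ℝ ((f^[m]) ∘ (g^[m])) p = (fderiv ℝ (f^[m]) (g^[m] p)).comp A' :=
      fderiv_comp p (hdf m _) (hdg m p)
    rw [h1, hgper] at h2
    have := congrFun (congrArg (fun T : E →L[ℝ] E => (T : E → E)) h2.symm) x
    simpa using this
  -- eigenvector
  obtain ⟨w, hw⟩ := hμ.exists_hasEigenvector
  have hweq : LinearMap.baseChange ℂ (A : E →ₗ[ℝ] E) w = μ • w := hw.apply_eq_smul
  set u : E := reT E w with hu'
  set v : E := imT E w with hv'
  have hAu : A u = μ.re • u - μ.im • v := by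
    have := congrArg (reT E) hweq
    rw [reT_baseChange, reT_smul] at this
    exact this
  have hAv : A v = μ.re • v + μ.im • u := by
    have := congrArg (imT E) hweq
    rw [imT_baseChange, imT_smul] at this
    exact this
  -- the invariant "plane" function
  set W : ℂ → E := fun z => z.re • u - z.im • v with hW
  have hAW : ∀ z : ℂ, A (W z) = W (μ * z) := by
    intro z
    show A (z.re • u - z.im • v) = (μ * z).re • u - (μ * z).im • v
    rw [map_sub, map_smul, map_smul, hAu, hAv, Complex.mul_re, Complex.mul_im]
    module
  have hA'W : ∀ z : ℂ, A' (W z) = W (μ⁻¹ * z) := by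
    intro z
    have h1 : W z = A (W (μ⁻¹ * z)) := by
      rw [hAW, ← mul_assoc, mul_inv_cancel₀ hμ0, one_mul]
    rw [h1, hA'A]
  -- powers
  have hWf : ∀ (k : ℕ) (z : ℂ), fderiv ℝ (f^[k * m]) p (W z) = W (μ ^ k * z) := by
    intro k; induction k with
    | zero => intro z; simp
    | succ k ih =>
        intro z
        have h1 : (k + 1) * m = m + k * m := by ring
        rw [h1, hcf m (k * m) p, hperk k]
        simp only [ContinuousLinearMap.coe_comp', Function.comp_apply]
        rw [ih z, ← hA, hAW, ← mul_assoc, ← pow_succ']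
  have hWg : ∀ (k : ℕ) (z : ℂ), fderiv ℝ (g^[k * m]) p (W z) = W ((μ⁻¹) ^ k * z) := by
    intro k; induction k with
    | zero => intro z; simp
    | succ k ih =>
        intro z
        have h1 : (k + 1) * m = m + k * m := by ring
        rw [h1, hcg m (k * m) p, hgperk k]
        simp only [ContinuousLinearMap.coe_comp', Function.comp_apply]
        rw [ih z, ← hA', hA'W, ← mul_assoc, ← pow_succ']
  have hm0 : 0 < m := hm
  have hWfn : ∀ (n : ℕ) (z : ℂ), fderiv ℝ (f^[n]) p (W z)
      = fderiv ℝ (f^[n % m]) p (W (μ ^ (n / m) * z)) := by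
    intro n z
    have h1 : n % m + (n / m) * m = n := Nat.mod_add_div' n m
    conv_lhs => rw [← h1]
    rw [hcf (n % m) ((n / m) * m) p, hperk (n / m)]
    simp only [ContinuousLinearMap.coe_comp', Function.comp_apply]
    rw [hWf]
  have hWgn : ∀ (n : ℕ) (z : ℂ), fderiv ℝ (g^[n]) p (W z)
      = fderiv ℝ (g^[n % m]) p (W ((μ⁻¹) ^ (n / m) * z)) := by
    intro n z
    have h1 : n % m + (n / m) * m = n := Nat.mod_add_div' n m
    conv_lhs => rw [← h1]
    rw [hcg (n % m) ((n / m) * m) p, hgperk (n / m)]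
    simp only [ContinuousLinearMap.coe_comp', Function.comp_apply]
    rw [hWg]
  -- norm bound for W on the unit circle
  have hWbd : ∀ z : ℂ, ‖z‖ = 1 → ‖W z‖ ≤ ‖u‖ + ‖v‖ := by
    intro z hz
    calc ‖z.re • u - z.im • v‖ ≤ ‖z.re • u‖ + ‖z.im • v‖ := norm_sub_le _ _
    _ = |z.re| * ‖u‖ + |z.im| * ‖v‖ := by rw [norm_smul, norm_smul]; rfl
    _ ≤ 1 * ‖u‖ + 1 * ‖v‖ := by
        gcongr
        · exact le_of_le_of_eq (Complex.abs_re_le_norm z) hz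
        · exact le_of_le_of_eq (Complex.abs_im_le_norm z) hz
    _ = ‖u‖ + ‖v‖ := by ring
  -- the uniform constant
  have hne : (Finset.range m).Nonempty := ⟨0, Finset.mem_range.mpr hm0⟩
  set C : ℝ := (Finset.range m).sup' hne
    (fun r => max ‖fderiv ℝ (f^[r]) p‖ ‖fderiv ℝ (g^[r]) p‖) with hC
  have hCf : ∀ r < m, ‖fderiv ℝ (f^[r]) p‖ ≤ C := fun r hr =>
    le_trans (le_max_left _ _)
      (Finset.le_sup' (fun r => max ‖fderiv ℝ (f^[r]) p‖ ‖fderiv ℝ (g^[r]) p‖)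
        (Finset.mem_range.mpr hr))
  have hCg : ∀ r < m, ‖fderiv ℝ (g^[r]) p‖ ≤ C := fun r hr =>
    le_trans (le_max_right _ _)
      (Finset.le_sup' (fun r => max ‖fderiv ℝ (f^[r]) p‖ ‖fderiv ℝ (g^[r]) p‖)
        (Finset.mem_range.mpr hr))
  have hC0 : 0 ≤ C := le_trans (norm_nonneg _) (hCf 0 hm0)
  -- pick a nonzero vector in the plane
  have huv : u ≠ 0 ∨ v ≠ 0 := by
    by_contra h
    push_neg at h
    apply hw.2
    rw [tensor_decomp w, ← hu', ← hv', h.1, h.2]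
    simp
  obtain ⟨c, hc1, hWc⟩ : ∃ c : ℂ, ‖c‖ = 1 ∧ W c ≠ 0 := by
    rcases huv with h | h
    · exact ⟨1, by simp, by simpa [hW] using h⟩
    · refine ⟨-Complex.I, by simp, ?_⟩
      have : W (-Complex.I) = v := by simp [hW]
      rw [this]; exact h
  -- contradiction with quasi-Anosov
  refine hQA p hp (W c) hWc ⟨C * (‖u‖ + ‖v‖), ?_⟩
  rintro y ⟨n, rfl⟩
  simp only [Dfn]
  split_ifs with hn
  · rw [hWfn n.toNat c]
    have h1 : ‖μ ^ (n.toNat / m) * c‖ = 1 := by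
      rw [norm_mul, norm_pow, habs, hc1, one_pow, one_mul]
    calc ‖fderiv ℝ (f^[n.toNat % m]) p (W (μ ^ (n.toNat / m) * c))‖
        ≤ ‖fderiv ℝ (f^[n.toNat % m]) p‖ * ‖W (μ ^ (n.toNat / m) * c)‖ :=
          ContinuousLinearMap.le_opNorm _ _
      _ ≤ C * (‖u‖ + ‖v‖) :=
          mul_le_mul (hCf _ (Nat.mod_lt _ hm0)) (hWbd _ h1) (norm_nonneg _) hC0
  · rw [hWgn (-n).toNat c]
    have h1 : ‖(μ⁻¹) ^ ((-n).toNat / m) * c‖ = 1 := by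
      rw [norm_mul, norm_pow, norm_inv, habs, inv_one, one_pow, one_mul, hc1]
    calc ‖fderiv ℝ (g^[(-n).toNat % m]) p (W ((μ⁻¹) ^ ((-n).toNat / m) * c))‖
        ≤ ‖fderiv ℝ (g^[(-n).toNat % m]) p‖ * ‖W ((μ⁻¹) ^ ((-n).toNat / m) * c)‖ :=
          ContinuousLinearMap.le_opNorm _ _
      _ ≤ C * (‖u‖ + ‖v‖) :=
          mul_le_mul (hCg _ (Nat.mod_lt _ hm0)) (hWbd _ h1) (norm_nonneg _) hC0
end
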